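/- arXiv:2106.10526 — 3 statements merged into one kernel-verified Lean document; each statement's English description precedes it below -/
import Mathlib

section
/- Let K ∈ ℕ and h_0,…,h_K ∈ ℝ be filter coefficients with generalized frequency response h : ℝ^K → ℝ. Then for any two vectors λ₁, λ₂ ∈ ℝ^K, one has h(λ₁) − h(λ₂) = ⟨∇_L h(λ₁, λ₂), λ₁ − λ₂⟩, where ⟨·,·⟩ is the Euclidean inner product on ℝ^K. -/
open scoped RealInnerProductSpace

/-- The generalized frequency response `h(λ) = ∑_{k=0}^K h_k ∏_{κ=1}^k λ_κ`
of a graph filter with coefficients `h_0, …, h_K` (the empty product, for `k = 0`, is `1`). -/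
noncomputable def genFreqResp (K : ℕ) (h : ℕ → ℝ) (lam : EuclideanSpace ℝ (Fin K)) : ℝ :=
  ∑ k ∈ Finset.range (K + 1), h k * ∏ κ : Fin K, (if (κ : ℕ) < k then lam κ else 1)

/-- The vector `λ^{(k)}` whose first `k` entries (here: indices `κ ≤ k` in 0-indexed terms,
i.e. the first `k+1 ∈ {1,…,K}` entries for `k : Fin K`) come from `lam1` and whose remaining
entries come from `lam2`. -/
noncomputable def lipMix (K : ℕ) (lam1 lam2 : EuclideanSpace ℝ (Fin K)) (k : Fin K) :
    EuclideanSpace ℝ (Fin K) :=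
  (WithLp.equiv 2 (Fin K → ℝ)).symm fun κ => if (κ : ℕ) ≤ (k : ℕ) then lam1 κ else lam2 κ

/-- The Lipschitz gradient `∇_L h(λ₁, λ₂)`: its `k`-th entry is the partial derivative of the
generalized frequency response with respect to its `k`-th argument, evaluated at `λ^{(k)}`. -/
noncomputable def lipGrad (K : ℕ) (h : ℕ → ℝ) (lam1 lam2 : EuclideanSpace ℝ (Fin K)) :
    EuclideanSpace ℝ (Fin K) :=
  (WithLp.equiv 2 (Fin K → ℝ)).symm fun k =>
    deriv (fun t : ℝ => genFreqResp K h ((WithLp.equiv 2 (Fin K → ℝ)).symm (Function.update (lipMix K lam1 lam2 k) k t))) (lam1 k)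

/-- slope coefficient -/
noncomputable def Bco (K : ℕ) (h : ℕ → ℝ) (w : EuclideanSpace ℝ (Fin K)) (k : Fin K) : ℝ :=
  ∑ j ∈ Finset.range (K + 1),
    (if (k : ℕ) < j then h j * ∏ κ ∈ Finset.univ.erase k, (if (κ : ℕ) < j then w κ else 1) else 0)

noncomputable def Aco (K : ℕ) (h : ℕ → ℝ) (w : EuclideanSpace ℝ (Fin K)) (k : Fin K) : ℝ :=
  ∑ j ∈ Finset.range (K + 1),
    (if (k : ℕ) < j then 0 else h j * ∏ κ ∈ Finset.univ.erase k, (if (κ : ℕ) < j then w κ else 1))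

lemma genFreqResp_update (K : ℕ) (h : ℕ → ℝ) (w : EuclideanSpace ℝ (Fin K)) (k : Fin K)
    (t : ℝ) :
    genFreqResp K h ((WithLp.equiv 2 (Fin K → ℝ)).symm (Function.update w k t)) = Aco K h w k + Bco K h w k * t := by
  unfold genFreqResp Aco Bco
  simp only [WithLp.equiv_symm_apply, WithLp.ofLp_toLp]
  rw [Finset.sum_mul, ← Finset.sum_add_distrib]
  refine Finset.sum_congr rfl fun j _ => ?_
  have hprod : ∏ κ : Fin K, (if (κ : ℕ) < j then Function.update w k t κ else 1)
      = (if (k : ℕ) < j then t else 1) *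
        ∏ κ ∈ Finset.univ.erase k, (if (κ : ℕ) < j then w κ else 1) := by
    rw [← Finset.mul_prod_erase Finset.univ _ (Finset.mem_univ k)]
    congr 1
    · simp
    · refine Finset.prod_congr rfl fun κ hκ => ?_
      rw [Function.update_of_ne (Finset.ne_of_mem_erase hκ)]
  rw [hprod]
  split_ifs <;> ring

lemma deriv_genFreqResp_update (K : ℕ) (h : ℕ → ℝ) (w : EuclideanSpace ℝ (Fin K)) (k : Fin K)
    (x : ℝ) :
    deriv (fun t : ℝ => genFreqResp K h ((WithLp.equiv 2 (Fin K → ℝ)).symm (Function.update w k t))) x = Bco K h w k := by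
  have : (fun t : ℝ => genFreqResp K h ((WithLp.equiv 2 (Fin K → ℝ)).symm (Function.update w k t)))
      = fun t => Aco K h w k + Bco K h w k * t := funext fun t => genFreqResp_update K h w k t
  rw [this]
  simpa using (((hasDerivAt_id x).const_mul (Bco K h w k)).const_add (Aco K h w k)).deriv

/-- `h(λ₁) − h(λ₂) = ⟨∇_L h(λ₁, λ₂), λ₁ − λ₂⟩`. -/
theorem genFreqResp_sub_eq_inner_lipGrad (K : ℕ) (h : ℕ → ℝ)
    (lam1 lam2 : EuclideanSpace ℝ (Fin K)) :
    genFreqResp K h lam1 - genFreqResp K h lam2 = ⟪lipGrad K h lam1 lam2, lam1 - lam2⟫ := by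
  set μ : ℕ → EuclideanSpace ℝ (Fin K) := fun j =>
    (WithLp.equiv 2 (Fin K → ℝ)).symm fun κ => if (κ : ℕ) < j then lam1 κ else lam2 κ with hμ
  have hμ0 : μ 0 = lam2 := by
    ext κ
    show (if (κ : ℕ) < 0 then lam1 κ else lam2 κ) = lam2 κ
    simp
  have hμK : μ K = lam1 := by
    ext κ
    show (if (κ : ℕ) < K then lam1 κ else lam2 κ) = lam1 κ
    simp [κ.isLt]
  have key : ∀ k : Fin K,
      genFreqResp K h (μ ((k : ℕ) + 1)) - genFreqResp K h (μ (k : ℕ))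
        = Bco K h (lipMix K lam1 lam2 k) k * (lam1 k - lam2 k) := by
    intro k
    have h1 : μ ((k : ℕ) + 1) = (WithLp.equiv 2 (Fin K → ℝ)).symm (Function.update (lipMix K lam1 lam2 k) k (lam1 k)) := by
      ext κ
      simp only [WithLp.equiv_symm_apply, WithLp.ofLp_toLp]
      rcases eq_or_ne κ k with rfl | hne
      · rw [Function.update_self]
        show (if (κ : ℕ) < (κ : ℕ) + 1 then lam1 κ else lam2 κ) = lam1 κ
        simp
      · rw [Function.update_of_ne hne]
        show (if (κ : ℕ) < (k : ℕ) + 1 then lam1 κ else lam2 κ)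
          = (if (κ : ℕ) ≤ (k : ℕ) then lam1 κ else lam2 κ)
        simp [Nat.lt_succ_iff]
    have h2 : μ (k : ℕ) = (WithLp.equiv 2 (Fin K → ℝ)).symm (Function.update (lipMix K lam1 lam2 k) k (lam2 k)) := by
      ext κ
      simp only [WithLp.equiv_symm_apply, WithLp.ofLp_toLp]
      rcases eq_or_ne κ k with rfl | hne
      · rw [Function.update_self]
        show (if (κ : ℕ) < (κ : ℕ) then lam1 κ else lam2 κ) = lam2 κ
        simp
      · rw [Function.update_of_ne hne]
        have hkk : ((κ : ℕ) ≤ (k : ℕ)) ↔ ((κ : ℕ) < (k : ℕ)) := by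
          constructor
          · intro hle
            exact lt_of_le_of_ne hle (by simpa [Fin.ext_iff] using hne)
          · exact le_of_lt
        show (if (κ : ℕ) < (k : ℕ) then lam1 κ else lam2 κ)
          = (if (κ : ℕ) ≤ (k : ℕ) then lam1 κ else lam2 κ)
        simp only [hkk]
    rw [h1, h2, genFreqResp_update, genFreqResp_update]
    ring
  have tele : genFreqResp K h lam1 - genFreqResp K h lam2
      = ∑ k ∈ Finset.range K, (genFreqResp K h (μ (k + 1)) - genFreqResp K h (μ k)) := by
    rw [Finset.sum_range_sub (fun j => genFreqResp K h (μ j)), hμ0, hμK]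
  rw [tele]
  have : ⟪lipGrad K h lam1 lam2, lam1 - lam2⟫
      = ∑ k : Fin K, lipGrad K h lam1 lam2 k * (lam1 k - lam2 k) := by
    simp [PiLp.inner_apply]
    exact Finset.sum_congr rfl fun _ _ => mul_comm _ _
  rw [this, Finset.sum_range
    (fun k => genFreqResp K h (μ (k + 1)) - genFreqResp K h (μ k))]
  refine Finset.sum_congr rfl fun k _ => ?_
  have := key k
  simp only [Fin.cast_val_eq_self] at this ⊢
  rw [this]
  congr 1
  have : lipGrad K h lam1 lam2 k
      = deriv (fun t : ℝ => genFreqResp K h ((WithLp.equiv 2 (Fin K → ℝ)).symm (Function.update (lipMix K lam1 lam2 k) k t)))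
          (lam1 k) := rfl
  rw [this, deriv_genFreqResp_update]
end

section
/- Let A be the adjacency matrix of a simple undirected graph on n nodes (A real symmetric with entries in {0,1} and zero diagonal) and let p ∈ [0,1]. Let B be a random symmetric n×n matrix with zero diagonal whose entries B_{ij} = B_{ji} for i < j are independent Bernoulli(p) random variables, and set E = A ∘ B − A. Then 𝔼[E²] = (1 − p)² A² + p(1 − p) D, where D is the diagonal degree matrix with D_{ii} = Σ_j A_{ij}. -/
open Matrix MeasureTheory ProbabilityTheory

/-- for an adjacency matrix `A` (symmetric, 0/1 entries, zero diagonal) and the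
RES error matrix `E = A ∘ B − A` with `B` a random symmetric 0/1 zero-diagonal matrix whose
upper-triangular entries are independent Bernoulli(p), one has (entrywise)
`𝔼[E²] = (1 − p)² A² + p(1 − p) D`, with `D` the diagonal degree matrix. -/
theorem expectation_RES_error_sq_adjacency (n : ℕ) (A : Matrix (Fin n) (Fin n) ℝ)
    (hA : A.IsSymm) (hA01 : ∀ i j, A i j = 0 ∨ A i j = 1) (hAdiag : ∀ i, A i i = 0)
    (p : ℝ) (hp : p ∈ Set.Icc (0 : ℝ) 1)
    (Ω : Type) [MeasurableSpace Ω] (μ : Measure Ω) [IsProbabilityMeasure μ]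
    (B : Ω → Matrix (Fin n) (Fin n) ℝ)
    (hBsymm : ∀ ω, (B ω).IsSymm)
    (hBdiag : ∀ ω i, B ω i i = 0)
    (hB01 : ∀ ω i j, B ω i j = 0 ∨ B ω i j = 1)
    (hBmeas : ∀ i j, Measurable fun ω => B ω i j)
    (hBern : ∀ i j : Fin n, i < j → μ {ω | B ω i j = 1} = ENNReal.ofReal p)
    (hindep : iIndepFun
      (fun (q : {q : Fin n × Fin n // q.1 < q.2}) ω => B ω q.1.1 q.1.2) μ) :
    ∀ i j, ∫ ω, ((A.hadamard (B ω) - A) * (A.hadamard (B ω) - A)) i j ∂μ =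
      ((1 - p) ^ 2 • (A * A) + (p * (1 - p)) • Matrix.diagonal (fun i => ∑ j, A i j)) i j := by
  have hp0 : (0:ℝ) ≤ p := hp.1
  have hBs : ∀ ω a b, B ω a b = B ω b a := fun ω a b => (hBsymm ω).apply b a
  -- integrability of entries of B
  have hintB : ∀ a b : Fin n, Integrable (fun ω => B ω a b) μ := by
    intro a b
    refine Integrable.mono' (integrable_const 1) (hBmeas a b).aestronglyMeasurable ?_
    filter_upwards with ω
    rcases hB01 ω a b with h | h <;> simp [h]
  -- expectation of an off-diagonal entry of B
  have hEB : ∀ a b : Fin n, a < b → ∫ ω, B ω a b ∂μ = p := by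
    intro a b hab
    have hs : MeasurableSet {ω | B ω a b = 1} :=
      (hBmeas a b) (measurableSet_singleton (1:ℝ))
    have heq : (fun ω => B ω a b) = Set.indicator {ω | B ω a b = 1} (fun _ => (1:ℝ)) := by
      funext ω
      rcases hB01 ω a b with h | h <;>
        simp [Set.indicator, h]
    rw [heq, MeasureTheory.integral_indicator_const _ hs, measureReal_def, hBern a b hab,
      ENNReal.toReal_ofReal hp0]
    simp
  have hEB' : ∀ a b : Fin n, a ≠ b → ∫ ω, B ω a b ∂μ = p := by
    intro a b hab
    rcases lt_or_gt_of_ne hab with h | h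
    · exact hEB a b h
    · rw [show (fun ω => B ω a b) = fun ω => B ω b a from funext fun ω => hBs ω a b]
      exact hEB b a h
  have hintB1 : ∀ a b : Fin n, Integrable (fun ω => B ω a b - 1) μ :=
    fun a b => (hintB a b).sub (integrable_const 1)
  have hEB1 : ∀ a b : Fin n, a ≠ b → ∫ ω, (B ω a b - 1) ∂μ = p - 1 := by
    intro a b hab
    rw [integral_sub (hintB a b) (integrable_const 1), hEB' a b hab, integral_const]
    simp
  -- independence cross term
  have hcross : ∀ a b c d : Fin n, a < b → c < d → (a, b) ≠ (c, d) →
      ∫ ω, (B ω a b - 1) * (B ω c d - 1) ∂μ = (p - 1) * (p - 1) := by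
    intro a b c d hab hcd hne
    have hi : IndepFun (fun ω => B ω a b) (fun ω => B ω c d) μ :=
      hindep.indepFun (i := ⟨(a, b), hab⟩) (j := ⟨(c, d), hcd⟩)
        (by simpa [Subtype.ext_iff] using hne)
    have hi2 : IndepFun (fun ω => B ω a b - 1) (fun ω => B ω c d - 1) μ := by
      have := hi.comp (φ := fun x : ℝ => x - 1) (ψ := fun x : ℝ => x - 1)
        (measurable_id.sub measurable_const) (measurable_id.sub measurable_const)
      exact this
    have := IndepFun.integral_mul_eq_mul_integral hi2 (hintB1 a b).aestronglyMeasurable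
      (hintB1 c d).aestronglyMeasurable
    rw [show (fun ω => (B ω a b - 1) * (B ω c d - 1)) =
      (fun ω => B ω a b - 1) * (fun ω => B ω c d - 1) from rfl] at *
    rw [this, hEB1 a b (ne_of_lt hab), hEB1 c d (ne_of_lt hcd)]
  intro i j
  -- entrywise expansion
  have hentry : ∀ ω, ((A.hadamard (B ω) - A) * (A.hadamard (B ω) - A)) i j
      = ∑ k, (A i k * A k j) * ((B ω i k - 1) * (B ω k j - 1)) := by
    intro ω
    rw [Matrix.mul_apply]
    refine Finset.sum_congr rfl fun k _ => ?_
    simp [Matrix.sub_apply, Matrix.hadamard_apply]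
    ring
  have hmeask : ∀ k, Measurable fun ω => (A i k * A k j) * ((B ω i k - 1) * (B ω k j - 1)) :=
    fun k => (measurable_const.mul (((hBmeas i k).sub measurable_const).mul
      ((hBmeas k j).sub measurable_const)))
  have hintk : ∀ k, Integrable
      (fun ω => (A i k * A k j) * ((B ω i k - 1) * (B ω k j - 1))) μ := by
    intro k
    refine Integrable.mono' (integrable_const 1) (hmeask k).aestronglyMeasurable ?_
    filter_upwards with ω
    rcases hA01 i k with h1 | h1 <;> rcases hA01 k j with h2 | h2 <;>
      rcases hB01 ω i k with h3 | h3 <;> rcases hB01 ω k j with h4 | h4 <;>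
      simp [h1, h2, h3, h4]
  have hEq1 : ∫ ω, ((A.hadamard (B ω) - A) * (A.hadamard (B ω) - A)) i j ∂μ
      = ∑ k, (A i k * A k j) * ∫ ω, (B ω i k - 1) * (B ω k j - 1) ∂μ := by
    rw [show (fun ω => ((A.hadamard (B ω) - A) * (A.hadamard (B ω) - A)) i j)
      = fun ω => ∑ k, (A i k * A k j) * ((B ω i k - 1) * (B ω k j - 1)) from
      funext hentry]
    rw [integral_finset_sum _ fun k _ => hintk k]
    exact Finset.sum_congr rfl fun k _ => integral_const_mul _ _
  -- key per-term computation
  have key : ∀ k, (A i k * A k j) * (∫ ω, (B ω i k - 1) * (B ω k j - 1) ∂μ)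
      = (A i k * A k j) * (if i = j then 1 - p else (p - 1) * (p - 1)) := by
    intro k
    rcases hA01 i k with h1 | h1
    · simp [h1]
    rcases hA01 k j with h2 | h2
    · simp [h2]
    have hki : k ≠ i := by
      rintro rfl; rw [hAdiag] at h1; norm_num at h1
    have hkj : k ≠ j := by
      rintro rfl; rw [hAdiag] at h2; norm_num at h2
    congr 1
    by_cases hij : i = j
    · subst hij
      rw [if_pos rfl]
      rw [show (fun ω => (B ω i k - 1) * (B ω k i - 1))
          = fun ω => 1 - B ω i k from funext fun ω => by
        rw [← hBs ω i k]; rcases hB01 ω i k with h | h <;> rw [h] <;> ring]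
      rw [integral_sub (integrable_const 1) (hintB i k), integral_const, hEB' i k hki.symm]
      simp
    · rw [if_neg hij]
      rcases lt_trichotomy i k with hik | hik | hik
      · rcases lt_trichotomy k j with hkj' | hkj' | hkj'
        · exact hcross i k k j hik hkj' (by
            rintro h; rw [Prod.mk.injEq] at h; exact (ne_of_lt hik) h.1)
        · exact absurd hkj' hkj
        · rw [show (fun ω => (B ω i k - 1) * (B ω k j - 1))
              = fun ω => (B ω i k - 1) * (B ω j k - 1) from funext fun ω => by
            rw [hBs ω k j]]
          exact hcross i k j k hik hkj' (by
            rintro h; rw [Prod.mk.injEq] at h; exact hij h.1)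
      · exact absurd hik.symm hki
      · rcases lt_trichotomy k j with hkj' | hkj' | hkj'
        · rw [show (fun ω => (B ω i k - 1) * (B ω k j - 1))
              = fun ω => (B ω k i - 1) * (B ω k j - 1) from funext fun ω => by
            rw [hBs ω i k]]
          exact hcross k i k j hik hkj' (by
            rintro h; rw [Prod.mk.injEq] at h; exact hij h.2)
        · exact absurd hkj' hkj
        · rw [show (fun ω => (B ω i k - 1) * (B ω k j - 1))
              = fun ω => (B ω k i - 1) * (B ω j k - 1) from funext fun ω => by
            rw [hBs ω i k, hBs ω k j]]
          exact hcross k i j k hik hkj' (by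
            rintro h; rw [Prod.mk.injEq] at h; exact hkj h.1)
  rw [hEq1, Finset.sum_congr rfl fun k _ => key k]
  have hsq : ∀ k, A i k * A k i = A i k := by
    intro k
    rw [hA.apply i k]
    rcases hA01 i k with h | h <;> rw [h] <;> ring
  by_cases hij : i = j
  · subst hij
    rw [if_pos rfl]
    simp only [Matrix.add_apply, Matrix.smul_apply, Matrix.mul_apply,
      Matrix.diagonal_apply_eq, smul_eq_mul]
    rw [show (∑ k, A i k * A k i) = ∑ k, A i k from
      Finset.sum_congr rfl fun k _ => hsq k]
    rw [show (∑ k, A i k * A k i * (1 - p)) = ∑ k, A i k * (1 - p) from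
      Finset.sum_congr rfl fun k _ => by rw [hsq k]]
    rw [← Finset.sum_mul]
    ring
  · rw [if_neg hij]
    simp only [Matrix.add_apply, Matrix.smul_apply, Matrix.mul_apply,
      Matrix.diagonal_apply_ne _ hij, smul_eq_mul, mul_zero, add_zero]
    rw [← Finset.sum_mul]
    ring
end

section
/- Let S be a real symmetric n×n matrix with eigenvalues λ_1,…,λ_n, let K ∈ ℕ, h_1,…,h_K ∈ ℝ, C_L > 0, and fix μ ∈ ℝ. For each eigenvalue λ_j of S and 1 ≤ r ≤ K define d_r(λ_j) = Σ_{k=r}^K h_k μ^{r−1} λ_j^{k−r}, and suppose that Σ_{r=1}^K (λ_j d_r(λ_j))² ≤ C_L² for every eigenvalue λ_j of S. Then the spectral (operator 2-)norm of the matrix M = Σ_{r=1}^K Σ_{k=r}^K Σ_{ℓ=r}^K h_k h_ℓ μ^{2r−2} S^{k+ℓ−2r+2} satisfies ‖M‖₂ ≤ C_L². -/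
open Matrix
open scoped Matrix.Norms.L2Operator

private lemma sum_mulVec_helper {ι : Type*} {n : ℕ} (s : Finset ι)
    (f : ι → Matrix (Fin n) (Fin n) ℝ) (x : Fin n → ℝ) :
    (∑ i ∈ s, f i) *ᵥ x = ∑ i ∈ s, f i *ᵥ x :=
  map_sum (Matrix.mulVec.addMonoidHomLeft x) f s

/-- for a real symmetric `S` with eigenvalues `λ_1, …, λ_n` (with orthonormal
eigenbasis `v`), filter coefficients `h_1, …, h_K`, `C_L > 0` and a fixed scalar `μ`, if
`∑_{r=1}^K (λ_j d_r(λ_j))² ≤ C_L²` for every eigenvalue `λ_j`, where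
`d_r(λ_j) = ∑_{k=r}^K h_k μ^{r−1} λ_j^{k−r}`, then the spectral (operator 2-)norm of
`M = ∑_{r=1}^K ∑_{k=r}^K ∑_{ℓ=r}^K h_k h_ℓ μ^{2r−2} S^{k+ℓ−2r+2}` satisfies `‖M‖₂ ≤ C_L²`.
Here `‖·‖` is Mathlib's `L2` operator norm on matrices, induced by the Euclidean norm. -/
theorem l2_opNorm_spectral_sum_le (n K : ℕ) (S : Matrix (Fin n) (Fin n) ℝ) (hS : S.IsSymm)
    (v : Fin n → Fin n → ℝ) (lam : Fin n → ℝ)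
    (horth : ∀ i j, v i ⬝ᵥ v j = if i = j then (1 : ℝ) else 0)
    (heig : ∀ i, S.mulVec (v i) = lam i • v i)
    (h : ℕ → ℝ) (CL : ℝ) (hCL : 0 < CL) (mu : ℝ)
    (hcond : ∀ j, (∑ r ∈ Finset.Icc 1 K,
        (lam j * ∑ k ∈ Finset.Icc r K, h k * mu ^ (r - 1) * lam j ^ (k - r)) ^ 2) ≤ CL ^ 2) :
    ‖∑ r ∈ Finset.Icc 1 K, ∑ k ∈ Finset.Icc r K, ∑ l ∈ Finset.Icc r K,
        (h k * h l * mu ^ (2 * r - 2)) • S ^ (k + l + 2 - 2 * r)‖ ≤ CL ^ 2 := by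
  classical
  set M : Matrix (Fin n) (Fin n) ℝ :=
    ∑ r ∈ Finset.Icc 1 K, ∑ k ∈ Finset.Icc r K, ∑ l ∈ Finset.Icc r K,
      (h k * h l * mu ^ (2 * r - 2)) • S ^ (k + l + 2 - 2 * r) with hMdef
  set c : Fin n → ℝ := fun j =>
    ∑ r ∈ Finset.Icc 1 K, ∑ k ∈ Finset.Icc r K, ∑ l ∈ Finset.Icc r K,
      h k * h l * mu ^ (2 * r - 2) * lam j ^ (k + l + 2 - 2 * r) with hcdef
  -- powers act on eigenvectors
  have hpow : ∀ (m : ℕ) (j : Fin n), (S ^ m) *ᵥ v j = (lam j ^ m) • v j := by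
    intro m j
    induction m with
    | zero => simp
    | succ m ih =>
      rw [pow_succ, ← Matrix.mulVec_mulVec, heig, Matrix.mulVec_smul, ih, smul_smul,
        pow_succ]
      ring_nf
  -- M acts on eigenvectors
  have hMv : ∀ j, M *ᵥ v j = c j • v j := by
    intro j
    rw [hMdef, sum_mulVec_helper]
    have : ∀ r ∈ Finset.Icc 1 K,
        ((∑ k ∈ Finset.Icc r K, ∑ l ∈ Finset.Icc r K,
              (h k * h l * mu ^ (2 * r - 2)) • S ^ (k + l + 2 - 2 * r)) *ᵥ v j)
          = ∑ k ∈ Finset.Icc r K, ∑ l ∈ Finset.Icc r K,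
              (h k * h l * mu ^ (2 * r - 2) * lam j ^ (k + l + 2 - 2 * r)) • v j := by
      intro r _
      rw [sum_mulVec_helper]
      refine Finset.sum_congr rfl fun k _ => ?_
      rw [sum_mulVec_helper]
      refine Finset.sum_congr rfl fun l _ => ?_
      rw [Matrix.smul_mulVec, hpow, smul_smul]
    rw [Finset.sum_congr rfl this, hcdef]
    simp only [← Finset.sum_smul]
  -- c j equals the sum of squares
  have hc_eq : ∀ j, c j = ∑ r ∈ Finset.Icc 1 K,
      (lam j * ∑ k ∈ Finset.Icc r K, h k * mu ^ (r - 1) * lam j ^ (k - r)) ^ 2 := by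
    intro j
    rw [hcdef]
    refine Finset.sum_congr rfl fun r hr => ?_
    rw [Finset.mem_Icc] at hr
    rw [Finset.mul_sum, sq, Finset.sum_mul_sum]
    refine Finset.sum_congr rfl fun k hk => Finset.sum_congr rfl fun l hl => ?_
    rw [Finset.mem_Icc] at hk hl
    have e1 : 2 * r - 2 = (r - 1) + (r - 1) := by omega
    have e2 : k + l + 2 - 2 * r = ((k - r) + (l - r)) + 2 := by omega
    rw [e1, e2, pow_add, pow_add, pow_add]
    ring
  have hc_nonneg : ∀ j, 0 ≤ c j := by
    intro j
    rw [hc_eq j]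
    exact Finset.sum_nonneg fun r _ => sq_nonneg _
  have hc_le : ∀ j, c j ≤ CL ^ 2 := fun j => (hc_eq j) ▸ hcond j
  -- orthonormality of columns
  have hkey : ∀ a b : Fin n, (∑ j, v j a * v j b) = if a = b then (1 : ℝ) else 0 := by
    set V : Matrix (Fin n) (Fin n) ℝ := Matrix.of v with hV
    have hVVt : V * Vᵀ = 1 := by
      ext i j
      simpa [hV, Matrix.mul_apply, Matrix.one_apply, dotProduct] using horth i j
    have hVtV : Vᵀ * V = 1 := mul_eq_one_comm.mp hVVt
    intro a b
    have := congr_fun (congr_fun hVtV a) b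
    simpa [hV, Matrix.mul_apply, Matrix.one_apply] using this
  -- decomposition of an arbitrary vector
  have hexp : ∀ x : Fin n → ℝ, (∑ j, (v j ⬝ᵥ x) • v j) = x := by
    intro x
    funext a
    simp only [Finset.sum_apply, Pi.smul_apply, smul_eq_mul, dotProduct]
    calc (∑ j, (∑ i, v j i * x i) * v j a)
        = ∑ j, ∑ i, v j a * v j i * x i := by
          refine Finset.sum_congr rfl fun j _ => ?_
          rw [Finset.sum_mul]
          exact Finset.sum_congr rfl fun i _ => by ring
      _ = ∑ i, (∑ j, v j a * v j i) * x i := by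
          rw [Finset.sum_comm]
          exact Finset.sum_congr rfl fun i _ => (Finset.sum_mul _ _ _).symm
      _ = x a := by
          simp [hkey, ite_mul]
  -- dot products of expansions
  have hdot : ∀ p q : Fin n → ℝ,
      ((∑ j, p j • v j) ⬝ᵥ (∑ j, q j • v j)) = ∑ j, p j * q j := by
    intro p q
    calc (∑ j, p j • v j) ⬝ᵥ (∑ j, q j • v j)
        = ∑ i, ∑ j, ∑ j', (p j * v j i) * (q j' * v j' i) := by
          simp only [dotProduct, Finset.sum_apply, Pi.smul_apply, smul_eq_mul]
          exact Finset.sum_congr rfl fun i _ => Finset.sum_mul_sum _ _ _ _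
      _ = ∑ j, ∑ j', p j * q j' * (v j ⬝ᵥ v j') := by
          rw [Finset.sum_comm]
          refine Finset.sum_congr rfl fun j _ => ?_
          rw [Finset.sum_comm]
          refine Finset.sum_congr rfl fun j' _ => ?_
          rw [dotProduct, Finset.mul_sum]
          exact Finset.sum_congr rfl fun i _ => by ring
      _ = ∑ j, p j * q j := by
          simp [horth, mul_ite, Finset.sum_ite_eq, Finset.sum_ite_eq']
  -- the main norm bound
  rw [Matrix.l2_opNorm_def]
  refine ContinuousLinearMap.opNorm_le_bound _ (by positivity) fun x => ?_
  set x' : Fin n → ℝ := (WithLp.equiv 2 (Fin n → ℝ)) x with hx'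
  have hxval : ((LinearEquiv.trans Matrix.toEuclideanLin
      LinearMap.toContinuousLinearMap) M) x
      = (WithLp.equiv 2 (Fin n → ℝ)).symm (M *ᵥ x') := by
    simp [Matrix.toEuclideanLin_apply, hx']
  rw [hxval]
  set w : Fin n → ℝ := fun j => v j ⬝ᵥ x' with hw
  have hMx : M *ᵥ x' = ∑ j, (w j * c j) • v j := by
    conv_lhs => rw [← hexp x']
    have : M *ᵥ (∑ j, (v j ⬝ᵥ x') • v j) = ∑ j, M *ᵥ ((v j ⬝ᵥ x') • v j) := by
      simpa only [Matrix.mulVecLin_apply] using map_sum M.mulVecLin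
        (fun j => (v j ⬝ᵥ x') • v j) Finset.univ
    rw [this]
    refine Finset.sum_congr rfl fun j _ => ?_
    rw [Matrix.mulVec_smul, hMv j, smul_smul, hw]
  have hx'exp : x' = ∑ j, w j • v j := (hexp x').symm
  -- norms via dot products
  have hnorm : ∀ y : Fin n → ℝ,
      ‖(WithLp.equiv 2 (Fin n → ℝ)).symm y‖ = Real.sqrt (y ⬝ᵥ y) := by
    intro y
    rw [EuclideanSpace.norm_eq]
    congr 1
    refine Finset.sum_congr rfl fun i _ => ?_
    simp [Real.norm_eq_abs, sq_abs, sq]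
  have hxnorm : ‖x‖ = Real.sqrt (x' ⬝ᵥ x') := by
    have : x = (WithLp.equiv 2 (Fin n → ℝ)).symm x' := by simp [hx']
    rw [this, hnorm]
  rw [hnorm, hxnorm, hMx]
  have hMxdot : ((∑ j, (w j * c j) • v j) ⬝ᵥ (∑ j, (w j * c j) • v j))
      = ∑ j, (w j * c j) ^ 2 := by
    rw [hdot]; exact Finset.sum_congr rfl fun j _ => (sq _).symm
  have hxdot : (x' ⬝ᵥ x') = ∑ j, w j ^ 2 := by
    conv_lhs => rw [hx'exp]
    rw [hdot]; exact Finset.sum_congr rfl fun j _ => (sq _).symm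
  rw [hMxdot, hxdot]
  have hbound : (∑ j, (w j * c j) ^ 2) ≤ (CL ^ 2) ^ 2 * ∑ j, w j ^ 2 := by
    rw [Finset.mul_sum]
    refine Finset.sum_le_sum fun j _ => ?_
    have h1 : (w j * c j) ^ 2 = c j ^ 2 * w j ^ 2 := by ring
    rw [h1]
    refine mul_le_mul_of_nonneg_right ?_ (sq_nonneg _)
    exact pow_le_pow_left₀ (hc_nonneg j) (hc_le j) 2
  calc Real.sqrt (∑ j, (w j * c j) ^ 2)
      ≤ Real.sqrt ((CL ^ 2) ^ 2 * ∑ j, w j ^ 2) := Real.sqrt_le_sqrt hbound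
    _ = CL ^ 2 * Real.sqrt (∑ j, w j ^ 2) := by
        rw [Real.sqrt_mul (sq_nonneg _), Real.sqrt_sq (by positivity)]
end
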